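/- arXiv:1812.06967 — 2 statements merged into one kernel-verified Lean document; each statement's English description precedes it below -/
import Mathlib

section
/- Discounting versus flow cost: define, as a function of the discount rate ρ ≥ 0, c̄₀(ρ) = (λ·(u_r^R − u_ℓ^R)·(u_ℓ^L − u_r^L) − ρ·(u_r^R·u_ℓ^L − u_ℓ^R·u_r^L))/((u_r^R − u_ℓ^R) + (u_ℓ^L − u_r^L)). Then the derivative dc̄₀/dρ = −(u_r^R·u_ℓ^L − u_ℓ^R·u_r^L)/((u_r^R − u_ℓ^R) + (u_ℓ^L − u_r^L)), and dc̄₀/dρ < 0 if and only if U(p) > 0 for every p ∈ [0,1]. -/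
/-!
`c̄₀` is affine in `ρ`, so its derivative is its slope `-B / D`, where `D > 0` and
`B = u_r^R u_ℓ^L - u_ℓ^R u_r^L` is the determinant of the payoff matrix; hence the slope is
negative iff `B > 0`. At the indifference belief `p* = (u_ℓ^L - u_r^L) / D ∈ [0, 1]` both `U_r`
and `U_ℓ` equal `B / D`, so `U > 0` on `[0, 1]` forces `B > 0`. Conversely `U ≥ U_ℓ` on `[0, p*]`
and `U ≥ U_r` on `[p*, 1]`; these affine functions are positive at the ends of their intervals
(`U_ℓ(0) = u_ℓ^L`, `U_r(1) = u_r^R`, and `B / D` at `p*`), hence positive in between.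
-/

set_option linter.unusedVariables false

noncomputable section

def Ur (urR ulR urL ulL lam p : ℝ) : ℝ := p * urR + (1 - p) * urL

def Ul (urR ulR urL ulL lam p : ℝ) : ℝ := p * ulR + (1 - p) * ulL

def U (urR ulR urL ulL lam p : ℝ) : ℝ :=
  max (Ur urR ulR urL ulL lam p) (Ul urR ulR urL ulL lam p)

/-- The upper cost cutoff `c̄₀` as a function of the discount rate `ρ`. -/
def cbar0 (urR ulR urL ulL lam : ℝ) (rho : ℝ) : ℝ :=
  (lam * (urR - ulR) * (ulL - urL) - rho * (urR * ulL - ulR * urL))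
    / ((urR - ulR) + (ulL - urL))

open Set

theorem hasDerivAt_cbar0 (urR ulR urL ulL lam rho : ℝ) :
    HasDerivAt (cbar0 urR ulR urL ulL lam)
      (-(urR * ulL - ulR * urL) / ((urR - ulR) + (ulL - urL))) rho := by
  unfold cbar0
  exact (((hasDerivAt_const rho (lam * (urR - ulR) * (ulL - urL))).sub
    ((hasDerivAt_id rho).mul_const (urR * ulL - ulR * urL))).div_const
      ((urR - ulR) + (ulL - urL))).congr_deriv (by ring)

theorem concaveOn_mul_add_one_sub_mul (x y : ℝ) :
    ConcaveOn ℝ univ (fun p : ℝ => p * x + (1 - p) * y) :=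
  ⟨convex_univ, fun a _ b _ s t _ _ hst => le_of_eq <| by
    simp only [smul_eq_mul]; linear_combination y * hst⟩

def indifferenceBelief (urR ulR urL ulL : ℝ) : ℝ :=
  (ulL - urL) / ((urR - ulR) + (ulL - urL))

section

variable {urR ulR urL ulL : ℝ} (lam : ℝ)

theorem Ur_indifferenceBelief (hD : (urR - ulR) + (ulL - urL) ≠ 0) :
    Ur urR ulR urL ulL lam (indifferenceBelief urR ulR urL ulL)
      = (urR * ulL - ulR * urL) / ((urR - ulR) + (ulL - urL)) := by
  unfold Ur indifferenceBelief
  field_simp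
  ring

theorem Ul_indifferenceBelief (hD : (urR - ulR) + (ulL - urL) ≠ 0) :
    Ul urR ulR urL ulL lam (indifferenceBelief urR ulR urL ulL)
      = (urR * ulL - ulR * urL) / ((urR - ulR) + (ulL - urL)) := by
  unfold Ul indifferenceBelief
  field_simp
  ring

theorem indifferenceBelief_mem_Icc (hr : ulR < urR) (hl : urL < ulL) :
    indifferenceBelief urR ulR urL ulL ∈ Icc 0 1 := by
  have hD : 0 < (urR - ulR) + (ulL - urL) := by linarith
  exact ⟨div_nonneg (by linarith) hD.le, (div_le_one hD).mpr (by linarith)⟩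

theorem U_pos_of_det_pos (hr : ulR < urR) (hl : urL < ulL) (hR : 0 < urR) (hL : 0 < ulL)
    (hB : 0 < urR * ulL - ulR * urL) :
    ∀ p ∈ Icc (0 : ℝ) 1, 0 < U urR ulR urL ulL lam p := by
  intro p hp
  set q := indifferenceBelief urR ulR urL ulL
  have hD : 0 < (urR - ulR) + (ulL - urL) := by linarith
  have hBD : 0 < (urR * ulL - ulR * urL) / ((urR - ulR) + (ulL - urL)) := div_pos hB hD
  rcases le_total p q with hpq | hqp
  · have hmin : min (Ul urR ulR urL ulL lam 0) (Ul urR ulR urL ulL lam q)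
        ≤ Ul urR ulR urL ulL lam p :=
      (concaveOn_mul_add_one_sub_mul ulR ulL).min_le_of_mem_Icc trivial trivial ⟨hp.1, hpq⟩
    rw [Ul_indifferenceBelief lam hD.ne'] at hmin
    have h0 : 0 < Ul urR ulR urL ulL lam 0 := by simpa [Ul] using hL
    exact (lt_min h0 hBD).trans_le (hmin.trans (le_max_right _ _))
  · have hmin : min (Ur urR ulR urL ulL lam q) (Ur urR ulR urL ulL lam 1)
        ≤ Ur urR ulR urL ulL lam p :=
      (concaveOn_mul_add_one_sub_mul urR urL).min_le_of_mem_Icc trivial trivial ⟨hqp, hp.2⟩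
    rw [Ur_indifferenceBelief lam hD.ne'] at hmin
    have h1 : 0 < Ur urR ulR urL ulL lam 1 := by simpa [Ur] using hR
    exact (lt_min hBD h1).trans_le (hmin.trans (le_max_left _ _))

theorem det_pos_of_U_pos (hr : ulR < urR) (hl : urL < ulL)
    (hU : ∀ p ∈ Icc (0 : ℝ) 1, 0 < U urR ulR urL ulL lam p) :
    0 < urR * ulL - ulR * urL := by
  have hD : 0 < (urR - ulR) + (ulL - urL) := by linarith
  have h := hU _ (indifferenceBelief_mem_Icc hr hl)
  rw [U, Ur_indifferenceBelief lam hD.ne', Ul_indifferenceBelief lam hD.ne', max_self] at h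
  exact (div_pos_iff_of_pos_right hD).mp h

end

theorem cbar_derivative_in_rho_general
    (urR ulR urL ulL lam : ℝ)
    (h_urR : urR > max 0 ulR) (h_ulL : ulL > max 0 urL) :
    (∀ rho : ℝ, deriv (cbar0 urR ulR urL ulL lam) rho
      = -(urR * ulL - ulR * urL) / ((urR - ulR) + (ulL - urL)))
    ∧ (-(urR * ulL - ulR * urL) / ((urR - ulR) + (ulL - urL)) < 0
        ↔ ∀ p ∈ Set.Icc (0 : ℝ) 1, 0 < U urR ulR urL ulL lam p) := by
  obtain ⟨hR, hr⟩ := max_lt_iff.mp h_urR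
  obtain ⟨hL, hl⟩ := max_lt_iff.mp h_ulL
  have hD : 0 < (urR - ulR) + (ulL - urL) := by linarith
  refine ⟨fun rho => (hasDerivAt_cbar0 urR ulR urL ulL lam rho).deriv, ?_⟩
  rw [neg_div, neg_lt_zero, div_pos_iff_of_pos_right hD]
  exact ⟨U_pos_of_det_pos lam hr hl hR hL, det_pos_of_U_pos lam hr hl⟩

/-- Discounting versus flow cost: `dc̄₀/dρ = −(u_r^R u_ℓ^L − u_ℓ^R u_r^L)/((u_r^R − u_ℓ^R)
+ (u_ℓ^L − u_r^L))`, and it is negative iff `U(p) > 0` for all `p ∈ [0,1]`. -/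
theorem cbar_derivative_in_rho
    (urR ulR urL ulL lam : ℝ)
    (h_urR : urR > max 0 ulR) (h_ulL : ulL > max 0 urL)
    (h_lam : 0 < lam) :
    (∀ rho : ℝ, deriv (cbar0 urR ulR urL ulL lam) rho
      = -(urR * ulL - ulR * urL) / ((urR - ulR) + (ulL - urL)))
    ∧ (-(urR * ulL - ulR * urL) / ((urR - ulR) + (ulL - urL)) < 0
        ↔ ∀ p ∈ Set.Icc (0 : ℝ) 1, 0 < U urR ulR urL ulL lam p) :=
  cbar_derivative_in_rho_general urR ulR urL ulL lam h_urR h_ulL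
end
end

section
/- U-shape of the coefficient functions and lower bound in the model with diminishing returns to attention: assume ρ > 0 and c ≥ 0, and let ū > 0. Then for every λ ∈ (0,1): A′(λ) > 0 if and only if λ > γ, and B′(λ) < 0 if and only if λ > γ. Consequently, for every λ ∈ [0,1], A(λ)·ū − B(λ)·c ≥ (γ·ū − c)/(ρ + γ), with equality if and only if λ = γ (provided c > 0 or ū > 0). -/
set_option linter.unusedVariables false

noncomputable section

/-- Coefficient `A(λ)` in the diminishing-returns model. -/
def Acoef (Γ : ℝ → ℝ) (ρ l : ℝ) : ℝ :=
  (Γ l - deriv Γ l * l) / (Γ l - deriv Γ l * l + ρ * (1 - deriv Γ l))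

/-- Coefficient `B(λ)` in the diminishing-returns model. -/
def Bcoef (Γ : ℝ → ℝ) (ρ l : ℝ) : ℝ :=
  (1 - deriv Γ l) / (Γ l - deriv Γ l * l + ρ * (1 - deriv Γ l))

/-!
With `D` the common denominator of `A` and `B`, the quotient rule gives `A' = ρ κ` and `B' = -κ`
for `κ(λ) = -Γ''(λ) (λ - Γ(λ)) / D(λ)²`. Since `Γ'' < 0` and `Γ` is strictly decreasing with
fixed point `γ`, `κ` has the sign of `λ - γ`. So `A ū - B c`, whose derivative is `(ρ ū + c) κ`,
has its strict minimum at `γ`, where `Γ(γ) = γ` and `Γ'(γ) = -1` give `A(γ) = γ / (ρ + γ)` and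
`B(γ) = 1 / (ρ + γ)`.
-/

theorem StrictAntiOn.apply_lt_self_iff {α : Type*} [LinearOrder α] {f : α → α} {s : Set α}
    (hf : StrictAntiOn f s) {γ x : α} (hγ : γ ∈ s) (hx : x ∈ s) (hfix : f γ = γ) :
    f x < x ↔ γ < x := by
  constructor
  · intro h
    by_contra! hle
    have := hf.antitoneOn hx hγ hle
    order
  · intro h
    have := hf hγ hx h
    order

theorem StrictAntiOn.lt_apply_self_iff {α : Type*} [LinearOrder α] {f : α → α} {s : Set α}
    (hf : StrictAntiOn f s) {γ x : α} (hγ : γ ∈ s) (hx : x ∈ s) (hfix : f γ = γ) :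
    x < f x ↔ x < γ := by
  constructor
  · intro h
    by_contra! hle
    have := hf.antitoneOn hγ hx hle
    order
  · intro h
    have := hf hx hγ h
    order

theorem AntitoneOn.deriv_nonpos_of_mem_Icc {f : ℝ → ℝ} {a b x : ℝ} (hab : a < b)
    (hf : AntitoneOn f (Set.Icc a b)) (hd : DifferentiableAt ℝ f x) (hx : x ∈ Set.Icc a b) :
    deriv f x ≤ 0 := by
  rw [← hd.derivWithin (uniqueDiffOn_Icc hab x hx)]
  exact hf.derivWithin_nonpos

theorem apply_lt_apply_of_hasDerivAt_sign_change {f f' : ℝ → ℝ} {a m b : ℝ}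
    (hm : m ∈ Set.Icc a b) (hf : ∀ x ∈ Set.Icc a b, HasDerivAt f (f' x) x)
    (hneg : ∀ x ∈ Set.Ioo a m, f' x < 0) (hpos : ∀ x ∈ Set.Ioo m b, 0 < f' x)
    {x : ℝ} (hx : x ∈ Set.Icc a b) (hxm : x ≠ m) : f m < f x := by
  have hcont : ContinuousOn f (Set.Icc a b) :=
    fun y hy => (hf y hy).continuousAt.continuousWithinAt
  rcases hxm.lt_or_gt with hlt | hgt
  · refine strictAntiOn_of_deriv_neg (convex_Icc a m)
      (hcont.mono (Set.Icc_subset_Icc le_rfl hm.2)) (fun y hy => ?_)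
      ⟨hx.1, hlt.le⟩ ⟨hm.1, le_rfl⟩ hlt
    rw [interior_Icc] at hy
    rw [(hf y ⟨hy.1.le, hy.2.le.trans hm.2⟩).deriv]
    exact hneg y hy
  · refine strictMonoOn_of_deriv_pos (convex_Icc m b)
      (hcont.mono (Set.Icc_subset_Icc hm.1 le_rfl)) (fun y hy => ?_)
      ⟨le_rfl, hm.2⟩ ⟨hgt.le, hx.2⟩ hgt
    rw [interior_Icc] at hy
    rw [(hf y ⟨hm.1.trans hy.1.le, hy.2.le⟩).deriv]
    exact hpos y hy

section Coefficients

def coefDenom (Γ : ℝ → ℝ) (ρ l : ℝ) : ℝ :=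
  Γ l - deriv Γ l * l + ρ * (1 - deriv Γ l)

def coefRate (Γ : ℝ → ℝ) (ρ l : ℝ) : ℝ :=
  -deriv (deriv Γ) l * (l - Γ l) / coefDenom Γ ρ l ^ 2

variable {Γ : ℝ → ℝ} {ρ l : ℝ}

theorem coefDenom_pos (hΓ : 0 ≤ Γ l) (hΓ' : deriv Γ l ≤ 0) (hl : 0 ≤ l) (hρ : 0 < ρ) :
    0 < coefDenom Γ ρ l := by
  unfold coefDenom
  nlinarith

theorem hasDerivAt_coefDenom (hd : DifferentiableAt ℝ Γ l)
    (hd' : DifferentiableAt ℝ (deriv Γ) l) :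
    HasDerivAt (coefDenom Γ ρ) (-deriv (deriv Γ) l * (l + ρ)) l := by
  have h : HasDerivAt (coefDenom Γ ρ)
      (deriv Γ l - (deriv (deriv Γ) l * l + deriv Γ l * 1) + ρ * -deriv (deriv Γ) l) l :=
    (hd.hasDerivAt.sub (hd'.hasDerivAt.mul (hasDerivAt_id' l))).add
      ((hd'.hasDerivAt.const_sub 1).const_mul ρ)
  convert h using 1
  ring

theorem hasDerivAt_Acoef (hd : DifferentiableAt ℝ Γ l) (hd' : DifferentiableAt ℝ (deriv Γ) l)
    (hD : coefDenom Γ ρ l ≠ 0) :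
    HasDerivAt (Acoef Γ ρ) (ρ * coefRate Γ ρ l) l := by
  have hN : HasDerivAt (fun x => Γ x - deriv Γ x * x)
      (deriv Γ l - (deriv (deriv Γ) l * l + deriv Γ l * 1)) l :=
    hd.hasDerivAt.sub (hd'.hasDerivAt.mul (hasDerivAt_id' l))
  have h : HasDerivAt (Acoef Γ ρ) _ l := hN.div (hasDerivAt_coefDenom hd hd') hD
  convert h using 1
  unfold coefRate coefDenom
  field_simp
  ring

theorem hasDerivAt_Bcoef (hd : DifferentiableAt ℝ Γ l) (hd' : DifferentiableAt ℝ (deriv Γ) l)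
    (hD : coefDenom Γ ρ l ≠ 0) :
    HasDerivAt (Bcoef Γ ρ) (-coefRate Γ ρ l) l := by
  have hN : HasDerivAt (fun x => 1 - deriv Γ x) (-deriv (deriv Γ) l) l :=
    hd'.hasDerivAt.const_sub 1
  have h : HasDerivAt (Bcoef Γ ρ) _ l := hN.div (hasDerivAt_coefDenom hd hd') hD
  convert h using 1
  unfold coefRate coefDenom
  field_simp
  ring

theorem coefRate_pos_iff (hΓ'' : deriv (deriv Γ) l < 0) (hD : coefDenom Γ ρ l ≠ 0) :
    0 < coefRate Γ ρ l ↔ Γ l < l := by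
  rw [coefRate, div_pos_iff_of_pos_right (by positivity),
    mul_pos_iff_of_pos_left (neg_pos.mpr hΓ''), sub_pos]

theorem coefRate_neg_iff (hΓ'' : deriv (deriv Γ) l < 0) (hD : coefDenom Γ ρ l ≠ 0) :
    coefRate Γ ρ l < 0 ↔ l < Γ l := by
  rw [coefRate, div_lt_iff₀ (by positivity), zero_mul, ← mul_zero (-deriv (deriv Γ) l),
    mul_lt_mul_iff_of_pos_left (neg_pos.mpr hΓ''), sub_neg]

theorem Acoef_eq_of_fixedPt (hfix : Γ l = l) (hslope : deriv Γ l = -1) (h : ρ + l ≠ 0) :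
    Acoef Γ ρ l = l / (ρ + l) := by
  rw [Acoef, hfix, hslope, show l - -1 * l + ρ * (1 - -1) = 2 * (ρ + l) by ring]
  field_simp
  ring

theorem Bcoef_eq_of_fixedPt (hfix : Γ l = l) (hslope : deriv Γ l = -1) (h : ρ + l ≠ 0) :
    Bcoef Γ ρ l = 1 / (ρ + l) := by
  rw [Bcoef, hfix, hslope, show l - -1 * l + ρ * (1 - -1) = 2 * (ρ + l) by ring]
  field_simp
  ring

end Coefficients

theorem AB_ushape_and_stationary_bound_general
    (Γ : ℝ → ℝ) (γ ρ c ubar : ℝ)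
    (hΓ_smooth : ContDiff ℝ 2 Γ)
    (hΓ_maps : ∀ x ∈ Set.Icc (0 : ℝ) 1, Γ x ∈ Set.Icc (0 : ℝ) 1)
    (hΓ_anti : StrictAntiOn Γ (Set.Icc (0 : ℝ) 1))
    (hΓ_concave : ∀ x ∈ Set.Icc (0 : ℝ) 1, deriv (deriv Γ) x < 0)
    (hγ_mem : γ ∈ Set.Ioo (0 : ℝ) 1) (hγ_fix : Γ γ = γ)
    (hγ_slope : deriv Γ γ = -1)
    (h_rho : 0 < ρ) (h_c : 0 ≤ c) (h_ubar : 0 < ubar) :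
    (∀ l ∈ Set.Ioo (0 : ℝ) 1,
      (0 < deriv (Acoef Γ ρ) l ↔ γ < l) ∧ (deriv (Bcoef Γ ρ) l < 0 ↔ γ < l))
    ∧ ∀ l ∈ Set.Icc (0 : ℝ) 1,
        Acoef Γ ρ l * ubar - Bcoef Γ ρ l * c ≥ (γ * ubar - c) / (ρ + γ)
        ∧ (Acoef Γ ρ l * ubar - Bcoef Γ ρ l * c = (γ * ubar - c) / (ρ + γ) ↔ l = γ) := by
  have hΓd : Differentiable ℝ Γ := hΓ_smooth.differentiable (by norm_num)
  have hΓ'd : Differentiable ℝ (deriv Γ) := hΓ_smooth.differentiable_deriv_two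
  have hγI : γ ∈ Set.Icc (0 : ℝ) 1 := Set.Ioo_subset_Icc_self hγ_mem
  have hD : ∀ l ∈ Set.Icc (0 : ℝ) 1, coefDenom Γ ρ l ≠ 0 := fun l hl =>
    (coefDenom_pos (hΓ_maps l hl).1
      (hΓ_anti.antitoneOn.deriv_nonpos_of_mem_Icc one_pos (hΓd l) hl) hl.1 h_rho).ne'
  have hrate_pos : ∀ l ∈ Set.Icc (0 : ℝ) 1, 0 < coefRate Γ ρ l ↔ γ < l := fun l hl =>
    (coefRate_pos_iff (hΓ_concave l hl) (hD l hl)).trans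
      (hΓ_anti.apply_lt_self_iff hγI hl hγ_fix)
  have hrate_neg : ∀ l ∈ Set.Icc (0 : ℝ) 1, coefRate Γ ρ l < 0 ↔ l < γ := fun l hl =>
    (coefRate_neg_iff (hΓ_concave l hl) (hD l hl)).trans
      (hΓ_anti.lt_apply_self_iff hγI hl hγ_fix)
  refine ⟨fun l hl => ?_, fun l hl => ?_⟩
  · have hlI := Set.Ioo_subset_Icc_self hl
    rw [(hasDerivAt_Acoef (hΓd l) (hΓ'd l) (hD l hlI)).deriv,
      (hasDerivAt_Bcoef (hΓd l) (hΓ'd l) (hD l hlI)).deriv,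
      mul_pos_iff_of_pos_left h_rho, neg_lt_zero]
    exact ⟨hrate_pos l hlI, hrate_pos l hlI⟩
  · have hf : ∀ x ∈ Set.Icc (0 : ℝ) 1,
        HasDerivAt (fun x => Acoef Γ ρ x * ubar - Bcoef Γ ρ x * c)
          ((ρ * ubar + c) * coefRate Γ ρ x) x := fun x hx => by
      have h : HasDerivAt (fun x => Acoef Γ ρ x * ubar - Bcoef Γ ρ x * c) _ x :=
        ((hasDerivAt_Acoef (hΓd x) (hΓ'd x) (hD x hx)).mul_const ubar).sub
          ((hasDerivAt_Bcoef (hΓd x) (hΓ'd x) (hD x hx)).mul_const c)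
      convert h using 1
      ring
    have hweight : 0 < ρ * ubar + c := by positivity
    have hργ : ρ + γ ≠ 0 := (add_pos h_rho hγ_mem.1).ne'
    have hvalue : Acoef Γ ρ γ * ubar - Bcoef Γ ρ γ * c = (γ * ubar - c) / (ρ + γ) := by
      rw [Acoef_eq_of_fixedPt hγ_fix hγ_slope hργ, Bcoef_eq_of_fixedPt hγ_fix hγ_slope hργ]
      ring
    rw [← hvalue]
    rcases eq_or_ne l γ with rfl | hne
    · exact ⟨le_rfl, iff_of_true rfl rfl⟩
    have hlt := apply_lt_apply_of_hasDerivAt_sign_change hγI hf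
      (fun x hx => mul_neg_of_pos_of_neg hweight
        ((hrate_neg x ⟨hx.1.le, hx.2.le.trans hγI.2⟩).2 hx.2))
      (fun x hx => mul_pos hweight ((hrate_pos x ⟨hγI.1.trans hx.1.le, hx.2.le⟩).2 hx.1)) hl hne
    exact ⟨hlt.le, iff_of_false hlt.ne' hne⟩

/-- U-shape of the coefficient functions `A`, `B`, and the lower bound
`A(λ)ū − B(λ)c ≥ (γū − c)/(ρ+γ)` with equality exactly at `λ = γ`. -/
theorem AB_ushape_and_stationary_bound
    (Γ : ℝ → ℝ) (γ ρ c ubar : ℝ)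
    (hΓ_smooth : ContDiff ℝ 2 Γ)
    (hΓ_maps : ∀ x ∈ Set.Icc (0 : ℝ) 1, Γ x ∈ Set.Icc (0 : ℝ) 1)
    (hΓ_anti : StrictAntiOn Γ (Set.Icc (0 : ℝ) 1))
    (hΓ_concave : ∀ x ∈ Set.Icc (0 : ℝ) 1, deriv (deriv Γ) x < 0)
    (hΓ0 : Γ 0 = 1) (hΓ1 : Γ 1 = 0)
    (hγ_mem : γ ∈ Set.Ioo (0 : ℝ) 1) (hγ_fix : Γ γ = γ)
    (hγ_uniq : ∀ x ∈ Set.Icc (0 : ℝ) 1, Γ x = x → x = γ)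
    (hγ_slope : deriv Γ γ = -1)
    (h_rho : 0 < ρ) (h_c : 0 ≤ c) (h_ubar : 0 < ubar) :
    (∀ l ∈ Set.Ioo (0 : ℝ) 1,
      (0 < deriv (Acoef Γ ρ) l ↔ γ < l) ∧ (deriv (Bcoef Γ ρ) l < 0 ↔ γ < l))
    ∧ ∀ l ∈ Set.Icc (0 : ℝ) 1,
        Acoef Γ ρ l * ubar - Bcoef Γ ρ l * c ≥ (γ * ubar - c) / (ρ + γ)
        ∧ (Acoef Γ ρ l * ubar - Bcoef Γ ρ l * c = (γ * ubar - c) / (ρ + γ) ↔ l = γ) :=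
  AB_ushape_and_stationary_bound_general Γ γ ρ c ubar hΓ_smooth hΓ_maps hΓ_anti hΓ_concave hγ_mem
    hγ_fix hγ_slope h_rho h_c h_ubar
end
end
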